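/- If T is a fully-resolved X-tree with n := |X| ≥ 3 and L ⊆ binom(X,2) is an edge-weight lasso for T, then |L| ≥ 2n − 3. -/

import Mathlib

open SimpleGraph

/-- An `X`-tree: a finite tree whose leaf set is (the image of) `X`,
with no vertices of degree 2. -/
structure XTree (α : Type) (X : Set α) where
  V : Type
  fintypeV : Fintype V
  tree : SimpleGraph V
  isTree : tree.IsTree
  ι : α → V
  ι_injOn : Set.InjOn ι X
  leaf_iff : ∀ v : V, (tree.neighborSet v).ncard = 1 ↔ v ∈ ι '' X
  no_deg_two : ∀ v : V, (tree.neighborSet v).ncard ≠ 2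

namespace XTree

variable {α : Type} {X : Set α}

/-- A vertex is interior if it is not a leaf. -/
def IsInterior (T : XTree α X) (v : T.V) : Prop := v ∉ T.ι '' X

/-- Fully-resolved: every interior vertex has degree 3. -/
def IsFullyResolved (T : XTree α X) : Prop :=
  ∀ v : T.V, T.IsInterior v → (T.tree.neighborSet v).ncard = 3

/-- The unique path between two vertices of the tree. -/
noncomputable def treePath (T : XTree α X) (u v : T.V) : T.tree.Walk u v :=
  (T.isTree.existsUnique_path u v).exists.choose

lemma treePath_isPath (T : XTree α X) (u v : T.V) : (T.treePath u v).IsPath :=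
  (T.isTree.existsUnique_path u v).exists.choose_spec

/-- Weighted path distance between two vertices. -/
noncomputable def pathDist (T : XTree α X) (w : Sym2 T.V → ℝ) (u v : T.V) : ℝ :=
  ((T.treePath u v).edges.map w).sum

lemma treePath_symm (T : XTree α X) (u v : T.V) :
    T.treePath u v = (T.treePath v u).reverse :=
  (T.isTree.existsUnique_path u v).unique (T.treePath_isPath u v)
    ((T.treePath_isPath v u).reverse)

lemma pathDist_symm (T : XTree α X) (w : Sym2 T.V → ℝ) (u v : T.V) :
    T.pathDist w u v = T.pathDist w v u := by
  unfold pathDist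
  rw [treePath_symm, SimpleGraph.Walk.edges_reverse, List.map_reverse, List.sum_reverse]

/-- The induced distance on pairs of leaf labels. -/
noncomputable def cordDist (T : XTree α X) (w : Sym2 T.V → ℝ) : Sym2 α → ℝ :=
  Sym2.lift ⟨fun a b => T.pathDist w (T.ι a) (T.ι b),
    fun a b => T.pathDist_symm w (T.ι a) (T.ι b)⟩

/-- An edge-weighting assigns a nonnegative weight to every edge. -/
def IsEdgeWeighting (T : XTree α X) (w : Sym2 T.V → ℝ) : Prop :=
  ∀ e ∈ T.tree.edgeSet, 0 ≤ w e

/-- A proper edge-weighting gives positive weight to every interior edge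
(i.e. every edge not incident with a leaf). -/
def IsProperWeighting (T : XTree α X) (w : Sym2 T.V → ℝ) : Prop :=
  T.IsEdgeWeighting w ∧ ∀ e ∈ T.tree.edgeSet, (∀ v ∈ e, T.IsInterior v) → 0 < w e

/-- The set of cords (2-element subsets) of `X`. -/
def cords (X : Set α) : Set (Sym2 α) := {c | ¬ c.IsDiag ∧ ∀ a ∈ c, a ∈ X}

/-- Two weighted trees are `L`-isometric if their leaf distances agree on `L`. -/
def LIsometric (T : XTree α X) (w : Sym2 T.V → ℝ) (T' : XTree α X) (w' : Sym2 T'.V → ℝ)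
    (L : Set (Sym2 α)) : Prop :=
  ∀ c ∈ L, T.cordDist w c = T'.cordDist w' c

/-- `L` is an edge-weight lasso for `T`. -/
def IsEdgeWeightLasso (T : XTree α X) (L : Set (Sym2 α)) : Prop :=
  ∀ w w' : Sym2 T.V → ℝ, T.IsProperWeighting w → T.IsProperWeighting w' →
    LIsometric T w T w' L → ∀ e ∈ T.tree.edgeSet, w e = w' e

/-- Two `X`-trees are equivalent if there is a graph isomorphism fixing `X`. -/
def Equivalent (T T' : XTree α X) : Prop :=
  ∃ φ : T.tree ≃g T'.tree, ∀ a ∈ X, φ (T.ι a) = T'.ι a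

/-- `L` is a topological lasso for `T`. -/
def IsTopologicalLasso (T : XTree α X) (L : Set (Sym2 α)) : Prop :=
  ∀ (T' : XTree α X) (w : Sym2 T.V → ℝ) (w' : Sym2 T'.V → ℝ),
    T.IsProperWeighting w → T'.IsProperWeighting w' →
    LIsometric T w T' w' L → Equivalent T T'

/-- `L` is a strong lasso for `T`. -/
def IsStrongLasso (T : XTree α X) (L : Set (Sym2 α)) : Prop :=
  IsEdgeWeightLasso T L ∧ IsTopologicalLasso T L

/-- The set of leaf labels on the side of edge `e` containing endpoint `u`. -/
def sideSet (T : XTree α X) (e : Sym2 T.V) (u : T.V) : Set α :=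
  {a | a ∈ X ∧ (T.tree.deleteEdges {e}).Reachable (T.ι a) u}

/-- The clusters of `T`: leaf sets of the two components of `T - e`, over all edges `e`. -/
def clus (T : XTree α X) : Set (Set α) :=
  {A | ∃ e ∈ T.tree.edgeSet, ∃ u ∈ e, A = T.sideSet e u}

/-- A stable transversal for a collection of subsets of `α`. -/
def IsStableTransversal (C : Set (Set α)) (f : Set α → α) : Prop :=
  (∀ A ∈ C, f A ∈ A) ∧ ∀ A ∈ C, ∀ B ∈ C, f A ∈ B → B ⊆ A → f A = f B

/-- Leaf labels of the component of `T - v` containing the vertex `u`. -/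
def compSet (T : XTree α X) (v u : T.V) : Set α :=
  {a | a ∈ X ∧ ∃ p : T.tree.Walk (T.ι a) u, v ∉ p.support}

/-- The triplet cover `L_{(T,f)}` generated by a transversal `f`. -/
def tripletCoverOf (T : XTree α X) (f : Set α → α) : Set (Sym2 α) :=
  {c | ∃ v u₁ u₂ : T.V, T.IsInterior v ∧ T.tree.Adj v u₁ ∧ T.tree.Adj v u₂ ∧ u₁ ≠ u₂ ∧
    c = s(f (T.compSet v u₁), f (T.compSet v u₂))}

/-- `L` is a stable triplet cover of `T`. -/
def IsStableTripletCover (T : XTree α X) (L : Set (Sym2 α)) : Prop :=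
  ∃ f : Set α → α, IsStableTransversal (clus T) f ∧ L = tripletCoverOf T f

/-- `T|{a,b,c,d}` is the quartet tree `ab||cd`: the four leaves are distinct members
of `X` and the path from `a` to `b` is vertex-disjoint from the path from `c` to `d`. -/
def Quartet (T : XTree α X) (a b c d : α) : Prop :=
  a ∈ X ∧ b ∈ X ∧ c ∈ X ∧ d ∈ X ∧ List.Pairwise (· ≠ ·) [a, b, c, d] ∧
  ∀ (p : T.tree.Walk (T.ι a) (T.ι b)) (q : T.tree.Walk (T.ι c) (T.ι d)),
    p.IsPath → q.IsPath → ∀ v, v ∈ p.support → v ∉ q.support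

/-- The cord `c` admits pivots relative to already-available cords `L ∪ earlier`. -/
def HasPivots (T : XTree α X) (L : Set (Sym2 α)) (earlier : List (Sym2 α))
    (c : Sym2 α) : Prop :=
  ∃ a b p q : α, c = s(a, b) ∧ Quartet T a p q b ∧
    ∀ c' ∈ [s(a, p), s(a, q), s(b, p), s(b, q), s(p, q)], c' ∈ L ∨ c' ∈ earlier

/-- `ord` is a shellable ordering of `cords X - L` with respect to `T`. -/
def IsShellableOrdering (T : XTree α X) (L : Set (Sym2 α)) (ord : List (Sym2 α)) : Prop :=
  ord.Nodup ∧ (∀ c, c ∈ ord ↔ c ∈ cords X \ L) ∧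
  ∀ i (h : i < ord.length), HasPivots T L (ord.take i) (ord.get ⟨i, h⟩)

/-- `L` is a shellable lasso for `T`: `L ⊆ cords X`, every element of `X` occurs in some
cord of `L`, and `cords X - L` admits a shellable ordering. -/
def IsShellableLasso (T : XTree α X) (L : Set (Sym2 α)) : Prop :=
  L ⊆ cords X ∧ (∀ a ∈ X, ∃ c ∈ L, a ∈ c) ∧ ∃ ord, IsShellableOrdering T L ord

/-- The graph `(Xs, L)` is a 2d-tree. -/
def Is2dTree (Xs : Set α) (L : Set (Sym2 α)) : Prop :=
  ∃ ord : List α, ord.Nodup ∧ (∀ a, a ∈ ord ↔ a ∈ Xs) ∧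
    ∃ h2 : 2 ≤ ord.length,
      s(ord.get ⟨0, by omega⟩, ord.get ⟨1, by omega⟩) ∈ L ∧
      ∀ i (h : i < ord.length), 2 ≤ i →
        {b | b ∈ ord.take i ∧ s(ord.get ⟨i, h⟩, b) ∈ L}.ncard = 2

/-- Leaves `x` and `y` form a cherry of `T`. -/
def IsCherry (T : XTree α X) (x y : α) : Prop :=
  x ≠ y ∧ x ∈ X ∧ y ∈ X ∧ ∃ v : T.V, T.tree.Adj (T.ι x) v ∧ T.tree.Adj (T.ι y) v

/-- `T'` is (equivalent to) the restriction `T|Y` of `T` to `Y ⊆ X`, characterized by the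
fact that the clusters of `T|Y` are exactly the nonempty proper restrictions to `Y`
of clusters of `T`. -/
def IsRestrictionOf {Y : Set α} (T' : XTree α Y) (T : XTree α X) : Prop :=
  Y ⊆ X ∧ clus T' = {A | (∃ B ∈ clus T, A = B ∩ Y) ∧ A.Nonempty ∧ A ≠ Y}

open Classical in
/-- One application of the extension rule (R), acting on a state consisting of
the current set of cords together with the current distance values. -/
def RStep (Xs : Set α) (S S' : Set (Sym2 α) × (Sym2 α → ℝ)) : Prop :=
  ∃ x y u z : α, x ∈ Xs ∧ y ∈ Xs ∧ u ∈ Xs ∧ z ∈ Xs ∧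
    List.Pairwise (· ≠ ·) [x, y, u, z] ∧
    s(x, y) ∈ S.1 ∧ s(y, u) ∈ S.1 ∧ s(y, z) ∈ S.1 ∧ s(x, u) ∈ S.1 ∧ s(u, z) ∈ S.1 ∧
    s(x, z) ∉ S.1 ∧
    S.2 s(x, y) + S.2 s(u, z) < S.2 s(x, u) + S.2 s(y, z) ∧
    S'.1 = insert s(x, z) S.1 ∧
    S'.2 = Function.update S.2 s(x, z) (S.2 s(x, u) + S.2 s(y, z) - S.2 s(y, u))

/-- `S` is the result `cl_R(L)` (with its `d`-values) of exhaustively applying rule (R)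
starting from `L` with initial distance values `d`. -/
def IsRClosureOf (Xs : Set α) (L : Set (Sym2 α)) (d : Sym2 α → ℝ)
    (S : Set (Sym2 α) × (Sym2 α → ℝ)) : Prop :=
  Relation.ReflTransGen (RStep Xs) (L, d) S ∧ ∀ S', ¬ RStep Xs S S'

end XTree

/-!
For fixed `T`, the leaf distances `d(x, y)`, `xy ∈ L`, are linear in the edge weights. If a
weighting `g` is invisible on `L`, then the constant weighting `C` and `C + g` are both proper
for large `C` and are `L`-isometric, so the lasso property forces `g = 0` on every edge. Hence
the linear map from weights on the edges to `ℝ^L` is injective and `|L|` is at least the number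
of edges, which is `2n - 3` by the handshake lemma for a tree with `n` leaves and all other
degrees equal to `3`.
-/

open Finset in
theorem SimpleGraph.IsTree.card_edgeFinset_add_three {V : Type*} [Fintype V]
    {G : SimpleGraph V} [DecidableRel G.Adj] (hG : G.IsTree) {S : Finset V}
    (hS : ∀ v ∈ S, G.degree v = 1) (hSc : ∀ v ∉ S, G.degree v = 3) :
    #G.edgeFinset + 3 = 2 * #S := by
  classical
  have hsum : ∑ v ∈ S, G.degree v + ∑ v ∈ Sᶜ, G.degree v = 2 * #G.edgeFinset := by
    rw [sum_add_sum_compl, sum_degrees_eq_twice_card_edges]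
  rw [sum_congr rfl hS, sum_congr rfl fun v hv => hSc v (mem_compl.1 hv), sum_const, sum_const,
    card_compl, smul_eq_mul, smul_eq_mul] at hsum
  have := hG.card_edgeFinset
  have := S.card_le_univ
  omega

namespace XTree

variable {α : Type} {X : Set α}

theorem finite_leaves (T : XTree α X) : X.Finite :=
  have := T.fintypeV
  (Set.toFinite _).of_finite_image T.ι_injOn

theorem finite_cords (hX : X.Finite) : (cords X).Finite :=
  (Set.sym2_eq_mk_image ▸ (hX.prod hX).image _ : X.sym2.Finite).subset
    fun _ hc => Set.mem_sym2_iff_subset.2 hc.2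

theorem IsFullyResolved.ncard_edgeSet_add_three {T : XTree α X} (hT : T.IsFullyResolved) :
    T.tree.edgeSet.ncard + 3 = 2 * X.ncard := by
  classical
  have := T.fintypeV
  have hdeg (v : T.V) : T.tree.degree v = (T.tree.neighborSet v).ncard := by
    rw [← card_neighborSet_eq_degree, ← Nat.card_eq_fintype_card, Nat.card_coe_set_eq]
  have hleaves : X.ncard = (T.ι '' X).toFinset.card := by
    rw [← Set.ncard_eq_toFinset_card', T.ι_injOn.ncard_image]
  rw [hleaves, Set.ncard_eq_toFinset_card']
  refine T.isTree.card_edgeFinset_add_three (fun v hv => ?_) (fun v hv => ?_)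
  · rw [hdeg, T.leaf_iff]; simpa using hv
  · rw [hdeg]; exact hT v (by simpa [IsInterior] using hv)

variable (T : XTree α X)

theorem pathDist_add (w w' : Sym2 T.V → ℝ) (u v : T.V) :
    T.pathDist (w + w') u v = T.pathDist w u v + T.pathDist w' u v :=
  List.sum_map_add

theorem pathDist_smul (r : ℝ) (w : Sym2 T.V → ℝ) (u v : T.V) :
    T.pathDist (r • w) u v = r * T.pathDist w u v :=
  List.sum_map_mul_left _ _ _

noncomputable def cordDistₗ (c : Sym2 α) : (Sym2 T.V → ℝ) →ₗ[ℝ] ℝ where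
  toFun w := T.cordDist w c
  map_add' w w' := by induction c using Sym2.ind; exact T.pathDist_add w w' _ _
  map_smul' r w := by induction c using Sym2.ind; exact T.pathDist_smul r w _ _

theorem cordDist_add (w w' : Sym2 T.V → ℝ) (c : Sym2 α) :
    T.cordDist (w + w') c = T.cordDist w c + T.cordDist w' c :=
  (T.cordDistₗ c).map_add w w'

theorem isProperWeighting_of_forall_pos {w : Sym2 T.V → ℝ} (hw : ∀ e, 0 < w e) :
    T.IsProperWeighting w :=
  ⟨fun e _ => (hw e).le, fun e _ _ => hw e⟩

variable {T} {L : Set (Sym2 α)}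

theorem IsEdgeWeightLasso.eq_zero_of_cordDist_eq_zero (hlasso : IsEdgeWeightLasso T L)
    {g : Sym2 T.V → ℝ} (hg : ∀ c ∈ L, T.cordDist g c = 0) {e : Sym2 T.V}
    (he : e ∈ T.tree.edgeSet) : g e = 0 := by
  have := T.fintypeV
  obtain ⟨m, hm⟩ := (Set.finite_range g).bddBelow
  set C := |m| + 1
  have hC : ∀ e, 0 < C + g e := fun e => by linarith [hm ⟨e, rfl⟩, neg_abs_le m]
  have := hlasso (fun _ => C) ((fun _ => C) + g)
    (T.isProperWeighting_of_forall_pos fun _ => by positivity)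
    (T.isProperWeighting_of_forall_pos hC)
    (fun c hc => by rw [cordDist_add, hg c hc, add_zero]) e he
  simpa using this

theorem IsEdgeWeightLasso.ncard_edgeSet_le (hlasso : IsEdgeWeightLasso T L) (hL : L.Finite) :
    T.tree.edgeSet.ncard ≤ L.ncard := by
  classical
  have := T.fintypeV
  have := hL.fintype
  let Φ := LinearMap.pi (fun c : L => T.cordDistₗ c) ∘ₗ
    Function.ExtendByZero.linearMap ℝ (Subtype.val : T.tree.edgeSet → Sym2 T.V)
  have hΦ : Function.Injective Φ := by
    refine (injective_iff_map_eq_zero Φ).2 fun k hk => funext fun e => ?_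
    have := hlasso.eq_zero_of_cordDist_eq_zero (fun c hc => congrFun hk ⟨c, hc⟩) e.2
    rwa [Function.ExtendByZero.linearMap_apply, Subtype.val_injective.extend_apply] at this
  have := LinearMap.finrank_le_finrank_of_injective hΦ
  rwa [Module.finrank_fintype_fun_eq_card, Module.finrank_fintype_fun_eq_card,
    ← Nat.card_eq_fintype_card, ← Nat.card_eq_fintype_card, Nat.card_coe_set_eq,
    Nat.card_coe_set_eq] at this

end XTree

open XTree in
theorem edgeWeightLasso_card_lower_bound_general {α : Type} (X : Set α)
    (T : XTree α X) (hT : T.IsFullyResolved)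
    (L : Set (Sym2 α)) (hLX : L ⊆ cords X) (hlasso : IsEdgeWeightLasso T L) :
    2 * X.ncard - 3 ≤ L.ncard := by
  have hedges := hT.ncard_edgeSet_add_three
  have hL := hlasso.ncard_edgeSet_le ((finite_cords T.finite_leaves).subset hLX)
  omega

open XTree in
/-- If `T` is a fully-resolved `X`-tree with `n := |X| ≥ 3` and
`L ⊆ binom(X,2)` is an edge-weight lasso for `T`, then `|L| ≥ 2n - 3`. -/
theorem edgeWeightLasso_card_lower_bound {α : Type} (X : Set α) (hfin : X.Finite)
    (hcard : 3 ≤ X.ncard) (T : XTree α X) (hT : T.IsFullyResolved)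
    (L : Set (Sym2 α)) (hLX : L ⊆ cords X) (hlasso : IsEdgeWeightLasso T L) :
    2 * X.ncard - 3 ≤ L.ncard :=
  edgeWeightLasso_card_lower_bound_general X T hT L hLX hlasso
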